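/- Let f = Σ_α a_α X_α be an n-symbol with associated weights (b_α). For each j ∈ {1,…,n}, the assignment e_α ↦ √(b_α / b_{j·α}) e_{j·α} on the orthonormal basis (e_α) extends to a bounded linear operator W_j^f on ℓ²(𝔽₊ⁿ), and its operator norm equals sup_{α ∈ 𝔽₊ⁿ} √(b_α / b_{j·α}), which is at most a_j^{−1/2}, where a_j is the coefficient of f at the single-letter word j. -/

import Mathlib

/-- Words over the alphabet `{1,…,n}`: the free monoid `𝔽₊ⁿ` (empty word `[]`,
concatenation `++`, word length `List.length`). -/
abbrev Word (n : ℕ) := List (Fin n)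

/-- An `n`-symbol: a finitely supported family of real coefficients indexed by words,
vanishing at the empty word, nonnegative everywhere, and strictly positive at
single-letter words. -/
structure NSymbol (n : ℕ) where
  a : Word n → ℝ
  finiteSupport : (Function.support a).Finite
  map_empty : a [] = 0
  nonneg : ∀ α : Word n, 0 ≤ a α
  pos_single : ∀ j : Fin n, 0 < a [j]

/-- The weight family `(b_α)` of an `n`-symbol: `b_∅ = 1` and, for a nonempty word `α`,
`b_α = Σ_{k=1}^{|α|} Σ_{α = γ₁⋯γ_k, γᵢ ≠ ∅} a_{γ₁}⋯a_{γ_k}`, i.e. the sum of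
`a_{γ₁}⋯a_{γ_k}` over all factorizations of `α` into at least one nonempty word. -/
noncomputable def weight {n : ℕ} (f : NSymbol n) (α : Word n) : ℝ :=
  if α = [] then 1
  else ∑ᶠ L ∈ {L : List (Word n) |
      L.flatten = α ∧ 1 ≤ L.length ∧ ∀ γ ∈ L, γ ≠ ([] : Word n)},
    (L.map f.a).prod

/-- The full Fock space `F(ℂⁿ)`, identified with `ℓ²(𝔽₊ⁿ)`. -/
noncomputable abbrev Fock (n : ℕ) := lp (fun _ : Word n => ℂ) 2

/-- The canonical orthonormal basis vector `e_α` of `ℓ²(𝔽₊ⁿ)`. -/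
noncomputable def e {n : ℕ} (α : Word n) : Fock n := lp.single 2 α 1

/-!
Prepending the one-letter block `[j]` to a factorization of `α` gives a factorization of `j :: α`,
so `a_j b_α ≤ b_{j·α}`; the factorization into single letters shows `b_α > 0`. Hence the weights
`√(b_α / b_{j·α})` are bounded by `a_j^{-1/2}`. A weighted shift `e_i ↦ c_i e_{σ i}` along an
injective `σ` is multiplication by `c` followed by the isometric extension by zero along `σ`, so its
norm is at most `‖c‖_∞`, and evaluating it on the basis vectors gives the reverse inequality.
-/

open scoped ENNReal
open Function

section

variable {ι κ E : Type*} [NormedAddCommGroup E] {p : ℝ≥0∞} {σ : ι → κ}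

lemma norm_rpow_extend_zero_eq_zero (hp : 0 < p.toReal) (x : ι → E)
    {k : κ} (hk : k ∉ Set.range σ) : ‖extend σ x 0 k‖ ^ p.toReal = 0 := by
  simp [extend_apply' _ _ _ hk, Real.zero_rpow hp.ne']

lemma tsum_norm_rpow_extend_zero (hσ : Injective σ) (hp : 0 < p.toReal)
    (x : ι → E) : ∑' k, ‖extend σ x 0 k‖ ^ p.toReal = ∑' i, ‖x i‖ ^ p.toReal := by
  rw [← hσ.tsum_eq fun k hk => by_contra fun h => hk (norm_rpow_extend_zero_eq_zero hp x h)]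
  simp only [hσ.extend_apply]

lemma Memℓp.extend_zero (hσ : Injective σ) (hp : 0 < p.toReal)
    {x : ι → E} (hx : Memℓp x p) : Memℓp (extend σ x 0) p := by
  rw [memℓp_gen_iff hp] at hx ⊢
  rw [← hσ.summable_iff fun k hk => norm_rpow_extend_zero_eq_zero hp x hk]
  simpa only [comp_def, hσ.extend_apply] using hx

end

namespace lp

section ExtendZero

variable {ι κ 𝕜 E : Type*} [NormedField 𝕜] [NormedAddCommGroup E] [NormedSpace 𝕜 E]
  {p : ℝ≥0∞} [Fact (1 ≤ p)] {σ : ι → κ}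

noncomputable def extendZero (hσ : Injective σ) (hp : 0 < p.toReal) :
    lp (fun _ : ι => E) p →ₗᵢ[𝕜] lp (fun _ : κ => E) p where
  toFun x := ⟨extend σ x 0, (lp.memℓp x).extend_zero hσ hp⟩
  map_add' x y := by
    ext k
    change extend σ (⇑(x + y)) 0 k = extend σ x 0 k + extend σ y 0 k
    rw [lp.coeFn_add, ← Pi.add_apply, ← extend_add, add_zero]
  map_smul' c x := by
    ext1
    simpa using extend_smul c σ x (0 : κ → E)
  norm_map' x := by
    rw [norm_eq_tsum_rpow hp, norm_eq_tsum_rpow hp]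
    exact congrArg (· ^ (1 / p.toReal)) (tsum_norm_rpow_extend_zero hσ hp x)

lemma extendZero_apply_apply (hσ : Injective σ) (hp : 0 < p.toReal) (x : lp (fun _ : ι => E) p)
    (k : κ) : extendZero (𝕜 := 𝕜) hσ hp x k = extend σ x 0 k := rfl

lemma extendZero_single [DecidableEq ι] [DecidableEq κ] (hσ : Injective σ) (hp : 0 < p.toReal)
    (i : ι) (v : E) :
    extendZero (𝕜 := 𝕜) hσ hp (lp.single p i v) = lp.single (E := fun _ : κ => E) p (σ i) v := by
  ext k
  rw [extendZero_apply_apply]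
  by_cases hk : k ∈ Set.range σ
  · obtain ⟨i', rfl⟩ := hk
    simp [hσ.extend_apply, lp.single_apply, Pi.single_apply, hσ.eq_iff]
  · rw [extend_apply' _ _ _ hk, lp.single_apply_ne]
    · rfl
    · rintro rfl; exact hk ⟨i, rfl⟩

end ExtendZero

section WeightedShift

variable {ι κ 𝕜 E : Type*} [RCLike 𝕜] [NormedAddCommGroup E] [NormedSpace 𝕜 E]
  {p : ℝ≥0∞} [Fact (1 ≤ p)]

lemma norm_smul_apply_le (c : lp (fun _ : ι => 𝕜) ∞) (x : ι → E) (i : ι) :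
    ‖c i • x i‖ ≤ ‖c‖ * ‖x i‖ := by
  rw [norm_smul]
  gcongr
  exact norm_apply_le_norm ENNReal.top_ne_zero c i

noncomputable def pointwiseSMul (c : lp (fun _ : ι => 𝕜) ∞) :
    lp (fun _ : ι => E) p →L[𝕜] lp (fun _ : ι => E) p :=
  LinearMap.mkContinuous
    { toFun := fun x => ⟨fun i => c i • x i,
        ((lp.memℓp x).const_smul (‖c‖ : 𝕜)).mono' fun i => by
          simpa [norm_smul] using norm_smul_apply_le c x i⟩
      map_add' := fun x y => by ext i; exact smul_add (c i) (x i) (y i)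
      map_smul' := fun a x => by ext i; simp [smul_comm (c i) a] }
    ‖c‖ fun x => by
      calc _ ≤ ‖(‖c‖ : 𝕜) • x‖ :=
            norm_mono (zero_lt_one.trans_le (Fact.out : 1 ≤ p)).ne' fun i => by
              simpa [norm_smul] using norm_smul_apply_le c x i
        _ = ‖c‖ * ‖x‖ := by simp [norm_smul]

@[simp]
lemma pointwiseSMul_apply_apply (c : lp (fun _ : ι => 𝕜) ∞) (x : lp (fun _ : ι => E) p) (i : ι) :
    pointwiseSMul c x i = c i • x i := rfl

lemma norm_pointwiseSMul_le (c : lp (fun _ : ι => 𝕜) ∞) :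
    ‖(pointwiseSMul c : lp (fun _ : ι => E) p →L[𝕜] _)‖ ≤ ‖c‖ :=
  LinearMap.mkContinuous_norm_le _ (norm_nonneg c) _

lemma pointwiseSMul_single [DecidableEq ι] (c : lp (fun _ : ι => 𝕜) ∞) (i : ι) (v : E) :
    pointwiseSMul c (lp.single p i v) = lp.single p i (c i • v) := by
  ext k
  by_cases hk : k = i
  · subst hk; simp
  · simp [hk]

variable {σ : ι → κ}

noncomputable def weightedShift (hσ : Injective σ) (hp : 0 < p.toReal)
    (c : lp (fun _ : ι => 𝕜) ∞) : lp (fun _ : ι => E) p →L[𝕜] lp (fun _ : κ => E) p :=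
  (extendZero hσ hp).toContinuousLinearMap ∘L pointwiseSMul c

lemma weightedShift_single [DecidableEq ι] [DecidableEq κ] (hσ : Injective σ)
    (hp : 0 < p.toReal) (c : lp (fun _ : ι => 𝕜) ∞) (i : ι) (v : E) :
    weightedShift hσ hp c (lp.single p i v) = lp.single p (σ i) (c i • v) := by
  simp [weightedShift, pointwiseSMul_single, extendZero_single]

lemma norm_weightedShift [Nontrivial E] (hσ : Injective σ) (hp : 0 < p.toReal)
    (c : lp (fun _ : ι => 𝕜) ∞) :
    ‖(weightedShift hσ hp c : lp (fun _ : ι => E) p →L[𝕜] _)‖ = ‖c‖ := by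
  classical
  refine le_antisymm ?_ (norm_le_of_forall_le (norm_nonneg _) fun i => ?_)
  · calc _ ≤ ‖(extendZero (𝕜 := 𝕜) (E := E) hσ hp).toContinuousLinearMap‖ *
            ‖(pointwiseSMul c : lp (fun _ : ι => E) p →L[𝕜] _)‖ :=
          ContinuousLinearMap.opNorm_comp_le _ _
      _ ≤ 1 * ‖c‖ := by
          gcongr
          · exact LinearIsometry.norm_toContinuousLinearMap_le _
          · exact norm_pointwiseSMul_le c
      _ = ‖c‖ := one_mul _
  · obtain ⟨v, hv⟩ := exists_ne (0 : E)
    have hp0 : 0 < p := zero_lt_one.trans_le (Fact.out : 1 ≤ p)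
    have := (weightedShift hσ hp c).le_opNorm (lp.single (E := fun _ : ι => E) p i v)
    rw [weightedShift_single, lp.norm_single hp0, lp.norm_single hp0, norm_smul] at this
    exact le_of_mul_le_mul_right this (norm_pos_iff.mpr hv)

end WeightedShift

end lp

namespace List

variable {ι : Type*}

-- Unlike the sum in `weight`, this also covers `[]`, whose only factorization `[]` has product `1`.
def factorizations (l : List ι) : Set (List (List ι)) :=
  {L | L.flatten = l ∧ ∀ γ ∈ L, γ ≠ []}

lemma factorizations_subset_range_splitWrtComposition (l : List ι) :
    l.factorizations ⊆ Set.range fun c : Composition l.length => l.splitWrtComposition c := by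
  rintro L ⟨rfl, hL⟩
  refine ⟨⟨L.map length, ?_, by simp [length_flatten]⟩, splitWrtComposition_flatten L _ rfl⟩
  simpa [List.length_pos_iff] using hL

lemma factorizations_finite (l : List ι) : l.factorizations.Finite :=
  (Set.finite_range _).subset (factorizations_subset_range_splitWrtComposition l)

lemma factorizations_nil : ([] : List ι).factorizations = {[]} := by
  ext L
  simp only [factorizations, flatten_eq_nil_iff, Set.mem_ofPred_eq, Set.mem_singleton_iff]
  constructor
  · rintro ⟨h1, h2⟩
    exact eq_nil_iff_forall_not_mem.mpr fun γ hγ => h2 γ hγ (h1 γ hγ)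
  · rintro rfl
    simp

lemma map_singleton_mem_factorizations (l : List ι) : l.map ([·]) ∈ l.factorizations :=
  ⟨by induction l <;> simp_all, by simp⟩

lemma cons_mem_factorizations_cons {l : List ι} {L : List (List ι)} (hL : L ∈ l.factorizations)
    (x : ι) : [x] :: L ∈ (x :: l).factorizations :=
  ⟨by simp [hL.1], by simpa using hL.2⟩

end List

variable {n : ℕ}

lemma NSymbol.prod_map_nonneg (f : NSymbol n) (L : List (Word n)) : 0 ≤ (L.map f.a).prod :=
  List.prod_nonneg fun _ h => by
    obtain ⟨γ, -, rfl⟩ := List.mem_map.mp h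
    exact f.nonneg γ

lemma weight_eq_sum (f : NSymbol n) (α : Word n) :
    weight f α = ∑ L ∈ α.factorizations_finite.toFinset, (L.map f.a).prod := by
  rw [← finsum_mem_eq_finite_toFinset_sum]
  rcases eq_or_ne α [] with rfl | hα
  · simp [weight, List.factorizations_nil]
  · rw [weight, if_neg hα]
    congr! 3 with L
    refine and_congr_right fun hL => and_iff_right ?_
    exact List.length_pos_iff.mpr fun h => hα (by simp [← hL, h])

lemma weight_pos (f : NSymbol n) (α : Word n) : 0 < weight f α := by
  rw [weight_eq_sum]
  refine lt_of_lt_of_le ?_ (Finset.single_le_sum (fun L _ => f.prod_map_nonneg L)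
    (α.factorizations_finite.mem_toFinset.mpr α.map_singleton_mem_factorizations))
  refine List.prod_pos fun x hx => ?_
  obtain ⟨i, -, rfl⟩ := List.mem_map.mp (List.map_map ▸ hx)
  exact f.pos_single i

lemma mul_weight_le_weight_cons (f : NSymbol n) (j : Fin n) (α : Word n) :
    f.a [j] * weight f α ≤ weight f (j :: α) := by
  rw [weight_eq_sum, weight_eq_sum, Finset.mul_sum]
  calc ∑ L ∈ α.factorizations_finite.toFinset, f.a [j] * (L.map f.a).prod
      = ∑ L ∈ α.factorizations_finite.toFinset.map ⟨([j] :: ·), List.cons_injective⟩,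
          (L.map f.a).prod := by simp
    _ ≤ _ := by
      refine Finset.sum_le_sum_of_subset_of_nonneg ?_ fun L _ _ => f.prod_map_nonneg L
      intro L hL
      obtain ⟨M, hM, rfl⟩ := Finset.mem_map.mp hL
      simpa using List.cons_mem_factorizations_cons (by simpa using hM) j

lemma sqrt_weight_div_weight_cons_le (f : NSymbol n) (j : Fin n) (α : Word n) :
    √(weight f α / weight f (j :: α)) ≤ (√(f.a [j]))⁻¹ := by
  rw [← Real.sqrt_inv]
  refine Real.sqrt_le_sqrt ?_
  rw [div_le_iff₀ (weight_pos f _), inv_mul_eq_div, le_div_iff₀ (f.pos_single j), mul_comm]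
  exact mul_weight_le_weight_cons f j α

noncomputable def shiftWeights (f : NSymbol n) (j : Fin n) : lp (fun _ : Word n => ℂ) ∞ :=
  ⟨fun α => (√(weight f α / weight f (j :: α)) : ℂ), memℓp_infty ⟨(√(f.a [j]))⁻¹, by
    rintro _ ⟨α, rfl⟩
    dsimp only
    rw [Complex.norm_real, Real.norm_of_nonneg (Real.sqrt_nonneg _)]
    exact sqrt_weight_div_weight_cons_le f j α⟩⟩

lemma shiftWeights_apply (f : NSymbol n) (j : Fin n) (α : Word n) :
    shiftWeights f j α = (√(weight f α / weight f (j :: α)) : ℂ) := rfl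

lemma norm_shiftWeights_apply (f : NSymbol n) (j : Fin n) (α : Word n) :
    ‖shiftWeights f j α‖ = √(weight f α / weight f (j :: α)) := by
  rw [shiftWeights_apply, Complex.norm_real, Real.norm_of_nonneg (Real.sqrt_nonneg _)]

theorem stmt4_general {n : ℕ} (f : NSymbol n) (j : Fin n) :
    ∃ W : Fock n →L[ℂ] Fock n,
      (∀ α : Word n, W (e α) = Real.sqrt (weight f α / weight f (j :: α)) • e (j :: α)) ∧
      ‖W‖ = ⨆ α : Word n, Real.sqrt (weight f α / weight f (j :: α)) ∧
      ‖W‖ ≤ (Real.sqrt (f.a [j]))⁻¹ := by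
  refine ⟨lp.weightedShift (List.cons_injective (a := j)) (by norm_num) (shiftWeights f j),
    fun α => ?_, ?_, ?_⟩
  · rw [e, e, lp.weightedShift_single, shiftWeights_apply, lp.single_smul, Complex.coe_smul]
    rfl
  · rw [lp.norm_weightedShift, lp.norm_eq_ciSup]
    simp only [norm_shiftWeights_apply]
  · rw [lp.norm_weightedShift]
    refine lp.norm_le_of_forall_le (by positivity) fun α => ?_
    rw [norm_shiftWeights_apply]
    exact sqrt_weight_div_weight_cons_le f j α

/-- the assignment `e_α ↦ √(b_α / b_{j·α}) e_{j·α}` extends to a bounded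
operator `W_j^f` on `ℓ²(𝔽₊ⁿ)`, of norm `sup_α √(b_α / b_{j·α}) ≤ a_j^{-1/2}`. -/
theorem stmt4 {n : ℕ} (hn : 1 ≤ n) (f : NSymbol n) (j : Fin n) :
    ∃ W : Fock n →L[ℂ] Fock n,
      (∀ α : Word n, W (e α) = Real.sqrt (weight f α / weight f (j :: α)) • e (j :: α)) ∧
      ‖W‖ = ⨆ α : Word n, Real.sqrt (weight f α / weight f (j :: α)) ∧
      ‖W‖ ≤ (Real.sqrt (f.a [j]))⁻¹ :=
  stmt4_general f j
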